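/- Let p, q be positive integers with q ≥ 4p + 1. Let T1 be the search tree on K_{p,q} whose handle is the path y_1, y_2, …, y_q from the root downward, with the vertices x_1, …, x_p attached as leaves (children of y_q), and let T2 be the search tree whose handle is the path y_q, y_{q−1}, …, y_1 from the root downward, with x_1, …, x_p attached as leaves (children of y_1). Then dist(T1, T2) ≥ 2pq. -/

import Mathlib

/-!
Along any rotation path from `T1` to `T2`, every pair `y_i, y_k` with `i < k` is reordered.
The rotation after which `y_i` stops being an ancestor of `y_k` has `y_i` as its upper vertex.
Unless it is the rotation at `(y_i, y_k)` itself, its lower vertex takes `y_k` away from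
`y_i`, and as nothing lies between the two rotated vertices, no descendant left below `y_i`
is adjacent to `y_k`: at that moment `y_i` has no vertex of `P` below it. Likewise for `y_k`
at the rotation after which it becomes an ancestor of `y_i`. Such a stripped `y_j` must lose
and regain every `x ∈ P` as a descendant, which takes a rotation at `(y_j, x)` and one at
`(x, y_j)`. With `r` stripped vertices, this exhibits `C(q, 2) - C(r, 2) + 2pr` distinct
rotations, and that is at least `2pq` because `q ≥ 4p + 1`.
-/

open SimpleGraph

/-- A search tree (elimination tree) on a graph `G`, encoded by its ancestor
relation: `anc u v` means that `u` is an ancestor of `v` (possibly `u = v`).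
Equivalently (for connected `G`): the root is a vertex `r`, joined to the roots
of search trees on each connected component of `G - r`. -/
structure SearchTree {V : Type} (G : SimpleGraph V) : Type where
  anc : V → V → Prop
  refl : ∀ v, anc v v
  antisymm : ∀ u v, anc u v → anc v u → u = v
  trans : ∀ u v w, anc u v → anc v w → anc u w
  chain : ∀ u v w, anc u w → anc v w → anc u v ∨ anc v u
  root : ∃ r, ∀ v, anc r v
  edge_comparable : ∀ u v, G.Adj u v → anc u v ∨ anc v u
  desc_connected : ∀ v, (G.induce {u | anc v u}).Connected

namespace SearchTree

/-- The set of descendants of `v` (including `v`): the vertex set of the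
subtree rooted at `v`. -/
def descSet {V : Type} {G : SimpleGraph V} (T : SearchTree G) (v : V) : Set V :=
  {u | T.anc v u}

/-- The height of a search tree: the maximal number of vertices on a
root-to-leaf path (a single-vertex tree has height 1). -/
noncomputable def height {V : Type} [Fintype V] {G : SimpleGraph V} (T : SearchTree G) : ℕ :=
  Finset.univ.sup fun v => Set.ncard {u | T.anc u v}

end SearchTree

/-- `T'` is obtained from `T` by a rotation at a vertex `b` with parent `a`:
the subtree of `T` rooted at `a` (with vertex set `A`) becomes rooted at `b`,
`a` becomes the root of the component of `G[A] - b` containing `a`, and all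
other subtrees are unchanged. The rotation is said to involve `a` and `b`. -/
def IsRotation {V : Type} {G : SimpleGraph V} (T T' : SearchTree G) (a b : V) : Prop :=
  a ≠ b ∧ T.anc a b ∧ T'.descSet b = T.descSet a ∧
    ∀ v, v ≠ a → v ≠ b → T'.descSet v = T.descSet v

/-- The rotation graph of `G`: vertices are the search trees on `G`, two
trees being adjacent when they differ by a single rotation. It is the skeleton
of the graph associahedron `A(G)`; its diameter is `δ(A(G))`. -/
def rotationGraph {V : Type} (G : SimpleGraph V) : SimpleGraph (SearchTree G) where
  Adj T T' := ∃ a b, IsRotation T T' a b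
  symm := by
    constructor
    rintro T T' ⟨a, b, hne, hanc, hb, hoth⟩
    have hanc' : T'.anc b a := by
      have ha : a ∈ T'.descSet b := by rw [hb]; exact T.refl a
      exact ha
    exact ⟨b, a, hne.symm, hanc', hb.symm, fun v h1 h2 => (hoth v h2 h1).symm⟩
  loopless := by
    constructor
    rintro T ⟨a, b, hne, hanc, hb, hoth⟩
    have h : T.anc b a := by
      have ha : a ∈ T.descSet b := by rw [hb]; exact T.refl a
      exact ha
    exact hne (T.antisymm a b hanc h)

/-- The tree-depth of `G`: the smallest height of a search tree on `G`. -/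
noncomputable def treeDepth {V : Type} [Fintype V] (G : SimpleGraph V) : ℕ :=
  sInf {h | ∃ T : SearchTree G, T.height = h}

/-- Adding a universal vertex to a graph. -/
def addUniversal {V : Type} (G : SimpleGraph V) : SimpleGraph (Option V) where
  Adj x y := match x, y with
    | none, none => False
    | none, some _ => True
    | some _, none => True
    | some a, some b => G.Adj a b
  symm := by
    constructor
    rintro (_ | a) (_ | b) h
    · exact h.elim
    · trivial
    · trivial
    · exact G.adj_symm h
  loopless := by
    constructor
    rintro (_ | a) h
    · exact h
    · exact G.irrefl h

/-- Disjoint union of two graphs. -/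
def disjUnion {V W : Type} (G : SimpleGraph V) (H : SimpleGraph W) : SimpleGraph (V ⊕ W) where
  Adj x y := match x, y with
    | .inl a, .inl b => G.Adj a b
    | .inr a, .inr b => H.Adj a b
    | _, _ => False
  symm := by
    constructor
    rintro (a | a) (b | b) h
    · exact G.adj_symm h
    · exact h.elim
    · exact h.elim
    · exact H.adj_symm h
  loopless := by
    constructor
    rintro (a | a) h
    · exact G.irrefl h
    · exact H.irrefl h

/-- Graphs built recursively from single vertices by adding universal vertices
and taking disjoint unions. -/
inductive TPBuild : {V : Type} → SimpleGraph V → Prop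
  | single : TPBuild (⊥ : SimpleGraph PUnit)
  | addUniv {V : Type} {G : SimpleGraph V} : TPBuild G → TPBuild (addUniversal G)
  | union {V W : Type} {G : SimpleGraph V} {H : SimpleGraph W} :
      TPBuild G → TPBuild H → TPBuild (disjUnion G H)

/-- A graph is trivially perfect if it can be built recursively from single
vertices by repeatedly adding universal vertices and taking disjoint unions. -/
def TriviallyPerfect {V : Type} (G : SimpleGraph V) : Prop :=
  ∃ (W : Type) (H : SimpleGraph W), TPBuild H ∧ Nonempty (G ≃g H)

/-- A graph is chordal if it has no induced cycle of length at least 4. -/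
def Chordal {V : Type} (G : SimpleGraph V) : Prop :=
  ∀ n, 4 ≤ n → IsEmpty (cycleGraph n ↪g G)

/-- The treewidth of `G`: one less than the smallest clique number of a chordal
supergraph of `G` on the same vertex set. -/
noncomputable def treewidth {V : Type} (G : SimpleGraph V) : ℕ :=
  sInf {k | ∃ H : SimpleGraph V, G ≤ H ∧ Chordal H ∧ H.cliqueNum = k + 1}

/-- An interval graph: the intersection graph of closed intervals on the real line. -/
def IsIntervalGraph {V : Type} (G : SimpleGraph V) : Prop :=
  ∃ lo hi : V → ℝ, (∀ v, lo v ≤ hi v) ∧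
    ∀ u v, G.Adj u v ↔ u ≠ v ∧ lo u ≤ hi v ∧ lo v ≤ hi u

/-- The pathwidth of `G`: one less than the smallest clique number of an
interval supergraph of `G` on the same vertex set. -/
noncomputable def pathwidth {V : Type} (G : SimpleGraph V) : ℕ :=
  sInf {k | ∃ H : SimpleGraph V, G ≤ H ∧ IsIntervalGraph H ∧ H.cliqueNum = k + 1}

/-- A vertex is simplicial if its neighborhood induces a clique. -/
def Simplicial {V : Type} (G : SimpleGraph V) (v : V) : Prop :=
  G.IsClique (G.neighborSet v)

/-- A set of vertices is (monophonically) convex if it can be obtained from the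
full vertex set by iteratively deleting a simplicial vertex of the current
induced subgraph. -/
inductive MConvex {V : Type} (G : SimpleGraph V) : Set V → Prop
  | univ : MConvex G Set.univ
  | delete {S : Set V} {v : V} (hS : MConvex G S) (hv : v ∈ S)
      (hsimp : Simplicial (G.induce S) ⟨v, hv⟩) : MConvex G (S \ {v})

/-- `P` is the projection of the search tree `T` on the convex set `S`: the
search tree on `G[S]` obtained from `T` by iteratively deleting the vertices
outside `S`; its ancestor relation is the restriction of that of `T`. -/
def IsProjection {V : Type} {G : SimpleGraph V} (S : Set V) (T : SearchTree G)
    (P : SearchTree (G.induce S)) : Prop :=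
  ∀ u v : S, P.anc u v ↔ T.anc (↑u) (↑v)

/-- The complete split graph `SPK p q`: a clique `P` of `p` vertices, an
independent set `Q` of `q` vertices, and all edges between `P` and `Q`. -/
def SPK (p q : ℕ) : SimpleGraph (Fin p ⊕ Fin q) where
  Adj x y := x ≠ y ∧ (x.isLeft ∨ y.isLeft)
  symm := by
    constructor
    rintro x y ⟨h1, h2⟩
    exact ⟨h1.symm, h2.symm⟩
  loopless := by
    constructor
    rintro x ⟨h, _⟩
    exact h rfl

namespace IsRotation

variable {V : Type} {G : SimpleGraph V} {T T' : SearchTree G} {a b u v c d : V}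

theorem symm (h : IsRotation T T' a b) : IsRotation T' T b a := by
  obtain ⟨hne, -, hb, hoth⟩ := h
  exact ⟨hne.symm, (Set.ext_iff.mp hb a).mpr (T.refl a), hb.symm,
    fun v h1 h2 => (hoth v h2 h1).symm⟩

theorem anc_right_iff (h : IsRotation T T' a b) : T'.anc b c ↔ T.anc a c :=
  Set.ext_iff.mp h.2.2.1 c

theorem anc_iff_of_ne (h : IsRotation T T' a b) (hva : v ≠ a) (hvb : v ≠ b) :
    T'.anc v c ↔ T.anc v c :=
  Set.ext_iff.mp (h.2.2.2 v hva hvb) c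

/-- As `a` is the parent of `b` in `T`, nothing lies strictly between them. -/
theorem not_adj_of_anc (h : IsRotation T T' a b) (hac : T.anc a c) (hca : c ≠ a)
    (hbc : ¬T.anc b c) (hbd : T.anc b d) : ¬G.Adj c d := by
  intro hcd
  rcases T.edge_comparable c d hcd with hcd | hdc
  · rcases T.chain c b d hcd hbd with hcb | hbc'
    · have hcb' : c ≠ b := fun e => hbc (e ▸ T.refl c)
      exact hcb' (T'.antisymm c b ((h.anc_iff_of_ne hca hcb').mpr hcb) (h.anc_right_iff.mpr hac))
    · exact hbc hbc'
  · exact hbc (T.trans _ _ _ hbd hdc)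

theorem anc_lost (h : IsRotation T T' a b) (huv : T.anc u v) (huv' : ¬T'.anc u v) :
    u = a ∧ (b = v ∨ ∀ d, T'.anc a d → ¬G.Adj v d) := by
  have hua : u = a := by
    by_contra hua
    by_cases hub : u = b
    · subst hub
      exact huv' (h.anc_right_iff.mpr (T.trans _ _ _ h.2.1 huv))
    · exact huv' ((h.anc_iff_of_ne hua hub).mpr huv)
  subst hua
  refine ⟨rfl, or_iff_not_imp_left.mpr fun hbv d hud => ?_⟩
  exact h.symm.not_adj_of_anc (h.anc_right_iff.mpr huv) (Ne.symm hbv) huv' hud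

theorem anc_gained (h : IsRotation T T' a b) (huv : ¬T.anc u v) (huv' : T'.anc u v) :
    u = b ∧ (a = v ∨ ∀ d, T.anc b d → ¬G.Adj v d) :=
  h.symm.anc_lost huv' huv

end IsRotation

theorem Nat.exists_le_lt_and_not_succ {P : ℕ → Prop} {l n : ℕ} (hln : l ≤ n) (hl : P l)
    (hn : ¬P n) : ∃ m, l ≤ m ∧ m < n ∧ P m ∧ ¬P (m + 1) := by
  induction n, hln using Nat.le_induction with
  | base => exact absurd hl hn
  | succ n hln ih =>
    by_cases hPn : P n
    · exact ⟨n, hln, n.lt_succ_self, hPn, hn⟩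
    · obtain ⟨m, hlm, hmn, hm⟩ := ih hPn
      exact ⟨m, hlm, hmn.trans n.lt_succ_self, hm⟩

theorem SimpleGraph.le_edist {V : Type} {G : SimpleGraph V} {u v : V} {n : ℕ∞}
    (h : ∀ w : G.Walk u v, n ≤ w.length) : n ≤ G.edist u v := by
  rw [edist_eq_sInf]
  exact le_sInf (Set.forall_mem_range.mpr h)

section RotationSequence

variable {V : Type} {G : SimpleGraph V} {N l n : ℕ} {S : ℕ → SearchTree G} {a b : ℕ → V}
  {u v : V}

theorem exists_rotations_of_walk {T T' : SearchTree G} (w : (rotationGraph G).Walk T T') :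
    ∃ a b : ℕ → V,
      ∀ m < w.length, IsRotation (w.getVert m) (w.getVert (m + 1)) (a m) (b m) := by
  have : Nonempty V := let ⟨r, _⟩ := T.root; ⟨r⟩
  have hrot : ∀ m, ∃ ab : V × V, m < w.length →
      IsRotation (w.getVert m) (w.getVert (m + 1)) ab.1 ab.2 := fun m => by
    by_cases hm : m < w.length
    · obtain ⟨a, b, h⟩ := w.adj_getVert_succ hm
      exact ⟨(a, b), fun _ => h⟩
    · exact ⟨Classical.arbitrary _, fun h => absurd h hm⟩
  choose ab hab using hrot
  exact ⟨fun m => (ab m).1, fun m => (ab m).2, hab⟩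

theorem exists_rotation_of_anc_lost
    (hrot : ∀ m < N, IsRotation (S m) (S (m + 1)) (a m) (b m)) (hln : l ≤ n) (hnN : n ≤ N)
    (hl : (S l).anc u v) (hn : ¬(S n).anc u v) :
    ∃ m < n, a m = u ∧ (b m = v ∨ ∀ d, (S (m + 1)).anc u d → ¬G.Adj v d) := by
  obtain ⟨m, -, hmn, hm, hm'⟩ :=
    Nat.exists_le_lt_and_not_succ (P := fun m => (S m).anc u v) hln hl hn
  obtain ⟨rfl, hb⟩ := (hrot m (by omega)).anc_lost hm hm'
  exact ⟨m, hmn, rfl, hb⟩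

theorem exists_rotation_of_anc_gained
    (hrot : ∀ m < N, IsRotation (S m) (S (m + 1)) (a m) (b m)) (hln : l ≤ n) (hnN : n ≤ N)
    (hl : ¬(S l).anc u v) (hn : (S n).anc u v) :
    ∃ m < n, b m = u ∧ (a m = v ∨ ∀ d, (S m).anc u d → ¬G.Adj v d) := by
  obtain ⟨m, -, hmn, hm, hm'⟩ :=
    Nat.exists_le_lt_and_not_succ (P := fun m => ¬(S m).anc u v) hln hl (not_not.mpr hn)
  obtain ⟨rfl, ha⟩ := (hrot m (by omega)).anc_gained hm (not_not.mp hm')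
  exact ⟨m, hmn, rfl, ha⟩

end RotationSequence

section CompleteBipartite

open Finset

variable {p q N : ℕ} {S : ℕ → SearchTree (completeBipartiteGraph (Fin p) (Fin q))}
  {a b : ℕ → Fin p ⊕ Fin q} {i j k : Fin q} {x : Fin p}

/-- At some step `y_j` has no vertex of `P` below it (so it is a leaf there). -/
def Stripped (S : ℕ → SearchTree (completeBipartiteGraph (Fin p) (Fin q))) (N : ℕ)
    (j : Fin q) : Prop :=
  ∃ m ≤ N, ∀ x : Fin p, ¬(S m).anc (.inr j) (.inl x)

theorem exists_rotation_or_stripped_of_anc_lost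
    (hrot : ∀ m < N, IsRotation (S m) (S (m + 1)) (a m) (b m))
    (h0 : (S 0).anc (.inr i) (.inr k)) (hN : ¬(S N).anc (.inr i) (.inr k)) :
    (∃ m < N, a m = .inr i ∧ b m = .inr k) ∨ Stripped S N i := by
  obtain ⟨m, hmN, ham, hbm | hfar⟩ :=
    exists_rotation_of_anc_lost hrot N.zero_le le_rfl h0 hN
  · exact .inl ⟨m, hmN, ham, hbm⟩
  · exact .inr ⟨m + 1, hmN, fun x hx => hfar _ hx (by simp)⟩

theorem exists_rotation_or_stripped_of_anc_gained
    (hrot : ∀ m < N, IsRotation (S m) (S (m + 1)) (a m) (b m))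
    (h0 : ¬(S 0).anc (.inr k) (.inr i)) (hN : (S N).anc (.inr k) (.inr i)) :
    (∃ m < N, a m = .inr i ∧ b m = .inr k) ∨ Stripped S N k := by
  obtain ⟨m, hmN, hbm, ham | hfar⟩ :=
    exists_rotation_of_anc_gained hrot N.zero_le le_rfl h0 hN
  · exact .inl ⟨m, hmN, ham, hbm⟩
  · exact .inr ⟨m, hmN.le, fun x hx => hfar _ hx (by simp)⟩

theorem exists_rotation_or_stripped_of_lt
    (hrot : ∀ m < N, IsRotation (S m) (S (m + 1)) (a m) (b m))
    (h0Q : ∀ i k : Fin q, (S 0).anc (.inr i) (.inr k) ↔ i ≤ k)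
    (hNQ : ∀ i k : Fin q, (S N).anc (.inr i) (.inr k) ↔ k ≤ i) (hik : i < k) :
    (∃ m < N, a m = .inr i ∧ b m = .inr k) ∨ Stripped S N i ∧ Stripped S N k := by
  rcases exists_rotation_or_stripped_of_anc_lost hrot ((h0Q i k).mpr hik.le)
    (mt (hNQ i k).mp hik.not_ge) with hdirect | hi
  · exact .inl hdirect
  rcases exists_rotation_or_stripped_of_anc_gained hrot (mt (h0Q k i).mp hik.not_ge)
    ((hNQ k i).mpr hik.le) with hdirect | hk
  · exact .inl hdirect
  exact .inr ⟨hi, hk⟩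

/-- `y_j` loses `x` as a descendant and later regains it. -/
theorem Stripped.exists_rotations (hj : Stripped S N j)
    (hrot : ∀ m < N, IsRotation (S m) (S (m + 1)) (a m) (b m))
    (h0 : (S 0).anc (.inr j) (.inl x)) (hN : (S N).anc (.inr j) (.inl x)) :
    (∃ m < N, a m = .inr j ∧ b m = .inl x) ∧ (∃ m < N, a m = .inl x ∧ b m = .inr j) := by
  obtain ⟨t, htN, ht⟩ := hj
  have hadj : (completeBipartiteGraph (Fin p) (Fin q)).Adj (.inl x) (.inr j) := by simp
  obtain ⟨m, hmt, ham, hbm | hfar⟩ :=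
    exists_rotation_of_anc_lost hrot t.zero_le htN h0 (ht x)
  · obtain ⟨m', hm'N, hbm', ham' | hfar'⟩ :=
      exists_rotation_of_anc_gained hrot htN le_rfl (ht x) hN
    · exact ⟨⟨m, by omega, ham, hbm⟩, ⟨m', hm'N, ham', hbm'⟩⟩
    · exact absurd hadj (hfar' _ ((S m').refl _))
  · exact absurd hadj (hfar _ ((S (m + 1)).refl _))

/-- The rotations counted in the lower bound: `(y_i, y_k)` with `i < k`, and
`(y_j, x)`, `(x, y_j)` with `x ∈ P`. -/
def countedPair : (Fin q × Fin q) ⊕ (Fin q × Fin p) ⊕ (Fin q × Fin p) →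
    (Fin p ⊕ Fin q) × (Fin p ⊕ Fin q)
  | .inl (i, k) => (.inr i, .inr k)
  | .inr (.inl (j, x)) => (.inr j, .inl x)
  | .inr (.inr (j, x)) => (.inl x, .inr j)

theorem countedPair_injective : Function.Injective (countedPair (p := p) (q := q)) := by
  rintro (⟨i, k⟩ | ⟨j, x⟩ | ⟨j, x⟩) (⟨i', k'⟩ | ⟨j', x'⟩ | ⟨j', x'⟩) h <;>
    simp_all [countedPair]

theorem two_mul_mul_le_choose_two_sub_add {r : ℕ} (hrq : r ≤ q) (hpq : 4 * p + 1 ≤ q) :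
    2 * p * q ≤ q.choose 2 - r.choose 2 + 2 * p * r := by
  have hchoose : r.choose 2 ≤ q.choose 2 := Nat.choose_le_choose 2 hrq
  suffices h : ((2 * p * q : ℕ) : ℚ) ≤ (q.choose 2 - r.choose 2 + 2 * p * r : ℕ) by
    exact_mod_cast h
  push_cast [Nat.cast_sub hchoose, Nat.cast_choose_two]
  have hrq' : (r : ℚ) ≤ q := by exact_mod_cast hrq
  have hpq' : (4 * p + 1 : ℚ) ≤ q := by exact_mod_cast hpq
  nlinarith [mul_nonneg (sub_nonneg.mpr hrq') (by linarith : (0 : ℚ) ≤ q + r - 1 - 4 * p)]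

theorem two_mul_mul_le_of_rotations (hpq : 4 * p + 1 ≤ q)
    (hrot : ∀ m < N, IsRotation (S m) (S (m + 1)) (a m) (b m))
    (h0Q : ∀ i k : Fin q, (S 0).anc (.inr i) (.inr k) ↔ i ≤ k)
    (hNQ : ∀ i k : Fin q, (S N).anc (.inr i) (.inr k) ↔ k ≤ i)
    (h0P : ∀ j x, (S 0).anc (.inr j) (.inl x)) (hNP : ∀ j x, (S N).anc (.inr j) (.inl x)) :
    2 * p * q ≤ N := by
  classical
  set R : Finset (Fin q) := {j | Stripped S N j}
  set W : Finset ((Fin q × Fin q) ⊕ (Fin q × Fin p) ⊕ (Fin q × Fin p)) :=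
    (({ik | ik.1 < ik.2} : Finset (Fin q × Fin q)) \ {ik ∈ R ×ˢ R | ik.1 < ik.2}).disjSum
      ((R ×ˢ univ).disjSum (R ×ˢ univ))
  have hW : Set.MapsTo (countedPair (p := p) (q := q)) W
      ↑(image (fun m => (a m, b m)) (range N)) := by
    have hmem : ∀ u v, (∃ m < N, a m = u ∧ b m = v) →
        (u, v) ∈ image (fun m => (a m, b m)) (range N) := by
      rintro u v ⟨m, hm, rfl, rfl⟩
      exact mem_image_of_mem _ (mem_range.mpr hm)
    rintro (⟨i, k⟩ | ⟨j, x⟩ | ⟨j, x⟩) hw <;>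
      simp only [W, R, mem_coe, inl_mem_disjSum, inr_mem_disjSum, mem_sdiff, mem_filter,
        mem_product, mem_univ, true_and, and_true] at hw <;> refine hmem _ _ ?_
    · obtain ⟨hik, hR⟩ := hw
      exact (exists_rotation_or_stripped_of_lt hrot h0Q hNQ hik).resolve_right
        fun h => hR ⟨h, hik⟩
    · exact (hw.exists_rotations hrot (h0P j x) (hNP j x)).1
    · exact (hw.exists_rotations hrot (h0P j x) (hNP j x)).2
  have hWN : #W ≤ N :=
    (card_le_card_of_injOn _ hW countedPair_injective.injOn).trans
      (card_image_le.trans (card_range N).le)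
  have hWcard : #W = q.choose 2 - (#R).choose 2 + 2 * p * #R := by
    rw [card_disjSum, card_disjSum, card_sdiff_of_subset (filter_subset_filter _ (subset_univ _)),
      card_product_filter_lt, Fintype.card_product_filter_lt, card_product, card_univ]
    simp only [Fintype.card_fin]
    ring
  calc 2 * p * q
      ≤ q.choose 2 - (#R).choose 2 + 2 * p * #R :=
        two_mul_mul_le_choose_two_sub_add ((card_le_univ R).trans_eq (Fintype.card_fin q)) hpq
    _ = #W := hWcard.symm
    _ ≤ N := hWN

end CompleteBipartite

theorem kpq_dist_T1_T2_lower (p q : ℕ) (hpq : 4 * p + 1 ≤ q)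
    (T1 T2 : SearchTree (completeBipartiteGraph (Fin p) (Fin q)))
    (hT1 : ∀ u v, T1.anc u v ↔ match u, v with
      | .inr i, .inr j => i ≤ j
      | .inr _, .inl _ => True
      | .inl x, .inl y => x = y
      | .inl _, .inr _ => False)
    (hT2 : ∀ u v, T2.anc u v ↔ match u, v with
      | .inr i, .inr j => j ≤ i
      | .inr _, .inl _ => True
      | .inl x, .inl y => x = y
      | .inl _, .inr _ => False) :
    ((2 * p * q : ℕ) : ℕ∞) ≤
      (rotationGraph (completeBipartiteGraph (Fin p) (Fin q))).edist T1 T2 := by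
  refine le_edist fun w => Nat.cast_le.mpr ?_
  obtain ⟨a, b, hrot⟩ := exists_rotations_of_walk w
  rw [← w.getVert_zero] at hT1
  rw [← w.getVert_length] at hT2
  exact two_mul_mul_le_of_rotations hpq hrot (fun i k => hT1 (.inr i) (.inr k))
    (fun i k => hT2 (.inr i) (.inr k)) (fun j x => (hT1 _ _).mpr trivial)
    (fun j x => (hT2 _ _).mpr trivial)
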